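/- Consider the intercept–resend model for n positions: let 𝒦 be a finite set of keys with a prior probability distribution p : 𝒦 → [0,1], let φ_j(k) ∈ ℝ (j = 1,…,n) be the basis angles determined by key k, and let β_j ∈ ℝ be Eve's measurement angles. Define the joint probability of key k, Alice's uniformly random bits x ∈ {0,1}^n, and Eve's outcomes z ∈ {0,1}^n by P(k, x, z) = p(k)·2^{−n}·∏_{j=1}^{n} cos²(β_j − φ_j(k) + (π/2)(z_j − x_j)). Then for every k ∈ 𝒦 and every z ∈ {0,1}^n, the marginal likelihood satisfies ∑_{x ∈ {0,1}^n} P(k, x, z) = p(k)·2^{−n}; consequently the marginal of z is P(z) = 2^{−n} and the Bayesian posterior P(k | z) = (∑_x P(k,x,z))/P(z) equals the prior p(k) for every z. In other words, Eve's measurement results alone leak no information about the key. -/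
import Mathlib

open Real Finset

/-- The joint probability of key `k`, Alice's bits `x` and Eve's outcomes `z` in the
intercept–resend model:
`P(k,x,z) = p(k) · 2^{-n} · ∏_j cos²(β_j − φ_j(k) + (π/2)(z_j − x_j))`. -/
noncomputable def interceptJoint {K : Type*} (n : ℕ) (p : K → ℝ) (φ : K → Fin n → ℝ)
    (β : Fin n → ℝ) (k : K) (x z : Fin n → Bool) : ℝ :=
  p k * (1 / 2 ^ n) *
    ∏ j, (Real.cos (β j - φ k j +
      (π / 2) * ((if z j then (1 : ℝ) else 0) - (if x j then (1 : ℝ) else 0)))) ^ 2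

lemma sum_pi_bool {n : ℕ} (f : Fin n → Bool → ℝ) :
    ∑ x : Fin n → Bool, ∏ j, f j (x j) = ∏ j, ∑ b, f j b := by
  rw [Finset.prod_univ_sum, Fintype.piFinset_univ]

lemma key_marg {K : Type*} (n : ℕ) (p : K → ℝ) (φ : K → Fin n → ℝ)
    (β : Fin n → ℝ) (k : K) (z : Fin n → Bool) :
    ∑ x : Fin n → Bool, interceptJoint n p φ β k x z = p k * (1 / 2 ^ n) := by
  unfold interceptJoint
  rw [← Finset.mul_sum, sum_pi_bool
    (fun j b => (Real.cos (β j - φ k j +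
      (π / 2) * ((if z j then (1 : ℝ) else 0) - (if b then (1 : ℝ) else 0)))) ^ 2)]
  have this : ∀ j, (∑ b : Bool, (Real.cos (β j - φ k j +
      (π / 2) * ((if z j then (1 : ℝ) else 0) - (if b then (1 : ℝ) else 0)))) ^ 2) = 1 := by
    intro j
    have h : ∀ t : ℝ, Real.cos (β j - φ k j + π/2*(t-1))^2
        + Real.cos (β j - φ k j + π/2*(t-0))^2 = 1 := by
      intro t
      have e : β j - φ k j + π/2*(t-1) = (β j - φ k j + π/2*t) - π/2 := by ring
      have e0 : β j - φ k j + π/2*(t-0) = β j - φ k j + π/2*t := by ring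
      rw [e, e0, Real.cos_sub_pi_div_two, Real.sin_sq_add_cos_sq]
    rw [Fintype.sum_bool]
    simpa using h (if z j then 1 else 0)
  rw [Finset.prod_congr rfl (fun j _ => this j), Finset.prod_const_one, mul_one]

theorem stmt7 {K : Type*} [Fintype K] (n : ℕ) (p : K → ℝ)
    (hp0 : ∀ k, 0 ≤ p k) (hp1 : ∑ k, p k = 1)
    (φ : K → Fin n → ℝ) (β : Fin n → ℝ) :
    (∀ (k : K) (z : Fin n → Bool),
      ∑ x : Fin n → Bool, interceptJoint n p φ β k x z = p k * (1 / 2 ^ n)) ∧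
    (∀ z : Fin n → Bool,
      ∑ k : K, ∑ x : Fin n → Bool, interceptJoint n p φ β k x z = 1 / 2 ^ n) ∧
    (∀ (k : K) (z : Fin n → Bool),
      (∑ x : Fin n → Bool, interceptJoint n p φ β k x z) /
        (∑ k' : K, ∑ x : Fin n → Bool, interceptJoint n p φ β k' x z) = p k) := by
  have hmz : ∀ z : Fin n → Bool,
      ∑ k : K, ∑ x : Fin n → Bool, interceptJoint n p φ β k x z = 1 / 2 ^ n := by
    intro z
    simp only [key_marg, ← Finset.sum_mul, hp1, one_mul]
  refine ⟨fun k z => key_marg n p φ β k z, hmz, fun k z => ?_⟩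
  rw [key_marg, hmz]
  field_simp
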